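/- Let Λ be a ring, let {X_i}_{i∈I} be a family of Λ-modules each with local endomorphism ring, and let M be a Λ-module. Suppose f : ⊕_{i∈I} X_i → M is a split epimorphism with section g : M → ⊕_{i∈I} X_i, and suppose that for every i ∈ I the component f_i : X_i → M is not a split monomorphism. If α : N → ⊕_{i∈I} X_i is a kernel of f with retraction β (so that 1 = g∘f + α∘β on ⊕ X_i), then α∘β restricted to each X_i is an isomorphism, yielding a contradiction; hence some f_i : X_i → M is a split monomorphism. In particular, if M is a nonzero pure projective direct summand-closed module admitting a pure epimorphism from a direct sum of finitely generated indecomposable modules, then M has a finitely generated direct summand. -/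

import Mathlib

open DirectSum

/-!
Suppose no component `f ∘ ι_i` is a split monomorphism, and take `m ≠ 0`. If `i` lies in the
(finite) support of `g m`, then `w = π_i g f ι_i` is not a unit of the local ring `End(X_i)`, so
`1 - w` has an inverse `c`, and `f' = f + f ι_i c π_i g f` is a left inverse of
`g' = g - ι_i π_i g`, whose `i`-th component vanishes. Since endomorphism rings are local,
every nonzero retract of `X_i` is all of `X_i`; this keeps every component of `f'` from being
a split monomorphism. Removing the support of `g m` one index at a time leaves a left
inverse `f'` and a map `g'` with `g' m = 0`, so `m = f' (g' m) = 0`.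
-/

namespace LinearMap

variable {R A B C M : Type*} [Ring R] [AddCommGroup A] [Module R A] [AddCommGroup B] [Module R B]
  [AddCommGroup C] [Module R C] [AddCommGroup M] [Module R M]

def IsSplitMono (φ : A →ₗ[R] B) : Prop :=
  ∃ r : B →ₗ[R] A, r ∘ₗ φ = id

theorem IsSplitMono.of_isUnit_comp {φ : A →ₗ[R] B} {r : B →ₗ[R] A}
    (hr : IsUnit (r ∘ₗ φ : Module.End R A)) : φ.IsSplitMono := by
  obtain ⟨t, ht⟩ := hr.exists_left_inv
  exact ⟨t ∘ₗ r, ht⟩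

theorem comp_eq_id_of_comp_eq_id [IsLocalRing (Module.End R A)] [Nontrivial (Module.End R B)]
    {a : A →ₗ[R] B} {b : B →ₗ[R] A} (h : a ∘ₗ b = id) : b ∘ₗ a = id := by
  have hq : IsIdempotentElem (b ∘ₗ a : Module.End R A) := by
    change (b ∘ₗ a) ∘ₗ (b ∘ₗ a) = b ∘ₗ a
    rw [comp_assoc, ← comp_assoc a, h, id_comp]
  rcases IsLocalRing.isUnit_or_isUnit_of_add_one (add_sub_cancel (b ∘ₗ a) 1) with hu | hu
  · exact (IsIdempotentElem.iff_eq_one_of_isUnit hu).1 hq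
  · have hba : b ∘ₗ a = 0 :=
      sub_eq_self.1 ((IsIdempotentElem.iff_eq_one_of_isUnit hu).1 hq.one_sub)
    have : (id : B →ₗ[R] B) = 0 :=
      calc id = (a ∘ₗ b) ∘ₗ (a ∘ₗ b) := by rw [h, id_comp]
        _ = a ∘ₗ (b ∘ₗ a) ∘ₗ b := by simp only [comp_assoc]
        _ = 0 := by rw [hba, zero_comp, comp_zero]
    exact absurd this (one_ne_zero (α := Module.End R B))

theorem IsSplitMono.of_add_comp [IsLocalRing (Module.End R A)] [IsLocalRing (Module.End R C)]
    {φ : A →ₗ[R] M} {ψ : C →ₗ[R] M} {d : A →ₗ[R] C} (hφ : ¬ φ.IsSplitMono)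
    (h : (φ + ψ ∘ₗ d).IsSplitMono) : ψ.IsSplitMono := by
  obtain ⟨r, hr⟩ := h
  have hunit : IsUnit (r ∘ₗ φ + (r ∘ₗ ψ) ∘ₗ d : Module.End R A) := by
    rw [comp_assoc, ← comp_add, hr]; exact isUnit_one
  rcases IsLocalRing.isUnit_or_isUnit_of_isUnit_add hunit with hu | hu
  · exact absurd (IsSplitMono.of_isUnit_comp hu) hφ
  · obtain ⟨t, ht⟩ := hu.exists_left_inv
    have hdt : d ∘ₗ (t ∘ₗ r ∘ₗ ψ) = id := comp_eq_id_of_comp_eq_id <| by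
      simpa [Module.End.mul_eq_comp, Module.End.one_eq_id, comp_assoc] using ht
    exact ⟨d ∘ₗ t ∘ₗ r, by simpa [comp_assoc] using hdt⟩

end LinearMap

section

variable {Λ I M : Type*} [Ring Λ] [DecidableEq I] {X : I → Type*} [∀ i, AddCommGroup (X i)]
  [∀ i, Module Λ (X i)] [∀ i, IsLocalRing (Module.End Λ (X i))] [AddCommGroup M] [Module Λ M]

theorem exists_leftInverse_erase_component
    {f : (⨁ i, X i) →ₗ[Λ] M} {g : M →ₗ[Λ] ⨁ i, X i} (hfg : f ∘ₗ g = LinearMap.id)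
    (hf : ∀ j, ¬ (f ∘ₗ lof Λ I X j).IsSplitMono) (i : I) :
    ∃ f' : (⨁ i, X i) →ₗ[Λ] M,
      f' ∘ₗ (g - lof Λ I X i ∘ₗ component Λ I X i ∘ₗ g) = LinearMap.id ∧
        ∀ j, ¬ (f' ∘ₗ lof Λ I X j).IsSplitMono := by
  set ι := lof Λ I X i
  set π := component Λ I X i
  have hw : IsUnit (1 - π ∘ₗ g ∘ₗ f ∘ₗ ι : Module.End Λ (X i)) :=
    (IsLocalRing.isUnit_or_isUnit_of_add_one (add_sub_cancel _ 1)).resolve_left fun hu ↦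
      hf i (LinearMap.IsSplitMono.of_isUnit_comp (r := π ∘ₗ g) hu)
  obtain ⟨c, hc⟩ := hw.exists_left_inv
  refine ⟨f + (f ∘ₗ ι) ∘ₗ c ∘ₗ π ∘ₗ g ∘ₗ f, ?_, fun j hj ↦ hf i ?_⟩
  · have hfg' (m : M) : f (g m) = m := LinearMap.congr_fun hfg m
    ext1 m
    have hcm := LinearMap.congr_fun hc (π (g m))
    simp only [Module.End.mul_apply, LinearMap.sub_apply, Module.End.one_apply, map_sub,
      LinearMap.comp_apply] at hcm
    simp only [LinearMap.add_apply, LinearMap.sub_apply, LinearMap.comp_apply, map_sub, hfg',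
      LinearMap.id_apply, eq_add_of_sub_eq hcm, map_add]
    abel
  · exact LinearMap.IsSplitMono.of_add_comp (hf j) <| by
      simpa only [LinearMap.add_comp, LinearMap.comp_assoc] using hj

theorem eq_zero_of_forall_notMem_component_eq_zero (S : Finset I)
    {f : (⨁ i, X i) →ₗ[Λ] M} {g : M →ₗ[Λ] ⨁ i, X i} (hfg : f ∘ₗ g = LinearMap.id)
    (hf : ∀ j, ¬ (f ∘ₗ lof Λ I X j).IsSplitMono) {m : M}
    (hm : ∀ j ∉ S, component Λ I X j (g m) = 0) : m = 0 := by
  induction S using Finset.induction_on generalizing f g with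
  | empty =>
    have hgm : g m = 0 := ext_component Λ fun j ↦ by simpa using hm j (Finset.notMem_empty j)
    rw [← LinearMap.id_apply (R := Λ) m, ← hfg, LinearMap.comp_apply, hgm, map_zero]
  | insert i S _ ih =>
    obtain ⟨f', hf'g, hf'⟩ := exists_leftInverse_erase_component hfg hf i
    refine ih hf'g hf' fun j hj ↦ ?_
    obtain rfl | hji := eq_or_ne j i
    · simp
    · simp [component.of, hji.symm, hm j (by simp [hji, hj])]

end

theorem stmt2 (Λ : Type) [Ring Λ] (I : Type) [DecidableEq I]
    (X : I → Type) [∀ i, AddCommGroup (X i)] [∀ i, Module Λ (X i)]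
    [∀ i, IsLocalRing (Module.End Λ (X i))]
    (M : Type) [AddCommGroup M] [Module Λ M] [Nontrivial M]
    (f : (⨁ i, X i) →ₗ[Λ] M) (g : M →ₗ[Λ] (⨁ i, X i))
    (hsec : f ∘ₗ g = LinearMap.id) :
    ∃ (i : I) (r : M →ₗ[Λ] X i),
      r ∘ₗ (f ∘ₗ DirectSum.lof Λ I X i) = LinearMap.id := by
  by_contra! h
  obtain ⟨m, hm⟩ := exists_ne (0 : M)
  classical
  exact hm <| eq_zero_of_forall_notMem_component_eq_zero (g m).support hsec
    (fun i ⟨r, hr⟩ ↦ h i r hr) fun j hj ↦ DFinsupp.notMem_support_iff.mp hj
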